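/- For 0 < p < 1/2 and q = 1 - p, the mean of the distribution P(S = n) = q·(pq)^n·C_n is ∑_{n≥0} n·q·(pq)^n·C_n = p/(q - p), where C_n is the n-th Catalan number. -/

import Mathlib

/-!
Since `(n + 1) Cₙ = binom(2n, n)`, the mean is `q (B(x) - C(x))` at `x = pq`, where `B` and `C`
are the generating functions of the central binomial coefficients and of the Catalan numbers.
`B(x) = (1 - 4x)^(-1/2)` is the binomial series, because `choose (-1/2) n = (-1/4)ⁿ binom(2n, n)`,
and the linear relation `2 Cₙ = 4 binom(2n, n) - binom(2n + 2, n + 1)` turns it into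
`2x C(x) = 1 - √(1 - 4x)` without any choice of the root of the quadratic equation for `C`.
At `x = pq` we have `√(1 - 4pq) = q - p`, hence `B = 1 / (q - p)` and `C = 1 / q`.
-/

theorem Ring.succ_mul_choose_succ {R : Type*} [Ring R] [BinomialRing R] (r : R) (k : ℕ) :
    ((k : R) + 1) * Ring.choose r (k + 1) = Ring.choose r k * (r - k) := by
  have h := Ring.choose_smul_choose r (Nat.le_succ k)
  rwa [Nat.choose_succ_self_right, Nat.succ_eq_add_one, Nat.add_sub_cancel_left,
    Ring.choose_one_right, nsmul_eq_mul, Nat.cast_succ] at h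

theorem Ring.choose_neg_one_half {K : Type*} [Field K] [CharZero K] (k : ℕ) :
    Ring.choose (-(1 / 2) : K) k = (-(1 / 4)) ^ k * Nat.centralBinom k := by
  induction k with
  | zero => simp
  | succ k ih =>
    have hk : ((k : K) + 1) ≠ 0 := by exact_mod_cast k.succ_ne_zero
    have hB : ((k : K) + 1) * Nat.centralBinom (k + 1) = 2 * (2 * k + 1) * Nat.centralBinom k := by
      exact_mod_cast Nat.succ_mul_centralBinom_succ k
    apply mul_left_cancel₀ hk
    rw [Ring.succ_mul_choose_succ, ih, pow_succ]
    linear_combination (-(1 / 4) : K) ^ k * (1 / 4) * hB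

theorem hasSum_centralBinom_mul_pow {x : ℝ} (hx : |x| < 1 / 4) :
    HasSum (fun n ↦ (Nat.centralBinom n : ℝ) * x ^ n) (√(1 - 4 * x))⁻¹ := by
  have hmem : -(4 * x) ∈ Metric.eball (0 : ℝ) 1 := by
    rw [Metric.mem_eball, edist_zero_right, enorm_neg, ← ofReal_norm, ENNReal.ofReal_lt_one,
      Real.norm_eq_abs, abs_mul, abs_of_pos four_pos]
    linarith
  have h := (Real.one_add_rpow_hasFPowerSeriesOnBall_zero (a := -(1 / 2))).hasSum hmem
  simp only [binomialSeries_apply, List.ofFn_const, List.prod_replicate, smul_eq_mul,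
    zero_add, Ring.choose_neg_one_half] at h
  have h4x : 0 ≤ 1 - 4 * x := by linarith [le_abs_self x]
  rw [Real.sqrt_eq_rpow, ← Real.rpow_neg h4x, sub_eq_add_neg]
  have hterm : (fun n ↦ (-(1 / 4) : ℝ) ^ n * Nat.centralBinom n * (-(4 * x)) ^ n) =
      fun n ↦ (Nat.centralBinom n : ℝ) * x ^ n := by
    ext n
    rw [mul_right_comm, ← mul_pow]
    ring
  rwa [hterm] at h

theorem two_mul_catalan_add_centralBinom_succ (n : ℕ) :
    2 * catalan n + Nat.centralBinom (n + 1) = 4 * Nat.centralBinom n := by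
  apply Nat.eq_of_mul_eq_mul_left n.succ_pos
  have hC := succ_mul_catalan_eq_centralBinom n
  have hB := Nat.succ_mul_centralBinom_succ n
  grind

theorem hasSum_two_mul_mul_catalan_mul_pow {x : ℝ} (hx : |x| < 1 / 4) :
    HasSum (fun n ↦ 2 * x * ((catalan n : ℝ) * x ^ n)) (1 - √(1 - 4 * x)) := by
  have hB := hasSum_centralBinom_mul_pow hx
  have hB_succ : HasSum (fun n ↦ (Nat.centralBinom (n + 1) : ℝ) * x ^ (n + 1))
      ((√(1 - 4 * x))⁻¹ - 1) := by
    simpa using (hasSum_nat_add_iff' 1).mpr hB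
  have hterm : ∀ n : ℕ, 2 * x * ((catalan n : ℝ) * x ^ n) =
      4 * x * ((Nat.centralBinom n : ℝ) * x ^ n) - Nat.centralBinom (n + 1) * x ^ (n + 1) := by
    intro n
    have h : 2 * (catalan n : ℝ) + Nat.centralBinom (n + 1) = 4 * Nat.centralBinom n := by
      exact_mod_cast two_mul_catalan_add_centralBinom_succ n
    linear_combination x ^ (n + 1) * h
  have hval : 4 * x * (√(1 - 4 * x))⁻¹ - ((√(1 - 4 * x))⁻¹ - 1) = 1 - √(1 - 4 * x) := by
    have h4x : 0 < 1 - 4 * x := by linarith [le_abs_self x]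
    have hs : 0 < √(1 - 4 * x) := Real.sqrt_pos.mpr h4x
    have hsq := Real.sq_sqrt h4x.le
    field_simp
    linear_combination hsq
  exact hval ▸ ((hB.mul_left (4 * x)).sub hB_succ).congr_fun hterm

theorem hasSum_catalan_mul_pow {x : ℝ} (hx : |x| < 1 / 4) (hx0 : x ≠ 0) :
    HasSum (fun n ↦ (catalan n : ℝ) * x ^ n) ((1 - √(1 - 4 * x)) / (2 * x)) := by
  have h2x : 2 * x ≠ 0 := mul_ne_zero two_ne_zero hx0
  rw [← hasSum_mul_left_iff h2x, mul_div_cancel₀ _ h2x]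
  exact hasSum_two_mul_mul_catalan_mul_pow hx

theorem catalan_distribution_mean (p q : ℝ) (hp : 0 < p) (hplt : p < 1 / 2)
    (hq : q = 1 - p) :
    ∑' n : ℕ, (n : ℝ) * (q * (p * q) ^ n * (catalan n : ℝ)) = p / (q - p) := by
  have hqp : 0 < q - p := by linarith
  have hx : |p * q| < 1 / 4 := by
    rw [abs_of_pos (by nlinarith)]
    nlinarith
  have hsqrt : √(1 - 4 * (p * q)) = q - p := by
    rw [Real.sqrt_eq_iff_eq_sq (by nlinarith) hqp.le, hq]
    ring
  have hB := hasSum_centralBinom_mul_pow hx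
  have hC := hasSum_catalan_mul_pow hx (by nlinarith)
  rw [hsqrt] at hB hC
  have hterm : ∀ n : ℕ, (n : ℝ) * (q * (p * q) ^ n * (catalan n : ℝ)) =
      q * ((Nat.centralBinom n : ℝ) * (p * q) ^ n) - q * ((catalan n : ℝ) * (p * q) ^ n) := by
    intro n
    have h : ((n : ℝ) + 1) * catalan n = Nat.centralBinom n := by
      exact_mod_cast succ_mul_catalan_eq_centralBinom n
    linear_combination q * (p * q) ^ n * h
  rw [tsum_congr hterm, ((hB.mul_left q).sub (hC.mul_left q)).tsum_eq]
  have hq0 : q ≠ 0 := by linarith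
  field_simp
  rw [hq]
  ring
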